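/- arXiv:1505.07876 — 4 statements merged into one kernel-verified Lean document; each statement's English description precedes it below -/
import Mathlib

section
/- Let Z = [[A,C],[D,E]] satisfy Z^T F Z = F with A invertible. Then Z = z_1 z_2 where z_1 = [[Id,0],[DA^{-1},Id]] and z_2 = [[A,C],[0, E - DA^{-1}C]], and both z_1 and z_2 satisfy z_i^T F z_i = F. -/
open Matrix

def Jmat (n : ℕ) : Matrix (Fin n) (Fin n) ℂ :=
  Matrix.of fun i j => if (i : ℕ) + (j : ℕ) + 1 = n then 1 else 0

def Fmat (n : ℕ) : Matrix (Fin n ⊕ Fin n) (Fin n ⊕ Fin n) ℂ :=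
  Matrix.fromBlocks 0 (Jmat n) (-(Jmat n)) 0

theorem stmt7 (n : ℕ) (A C D E : Matrix (Fin n) (Fin n) ℂ)
    (hZ : (Matrix.fromBlocks A C D E)ᵀ * Fmat n * Matrix.fromBlocks A C D E = Fmat n)
    (hA : IsUnit A) :
    Matrix.fromBlocks A C D E
        = Matrix.fromBlocks 1 0 (D * A⁻¹) 1 * Matrix.fromBlocks A C 0 (E - D * A⁻¹ * C) ∧
    (Matrix.fromBlocks 1 0 (D * A⁻¹) 1)ᵀ * Fmat n * Matrix.fromBlocks 1 0 (D * A⁻¹) 1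
        = Fmat n ∧
    (Matrix.fromBlocks A C 0 (E - D * A⁻¹ * C))ᵀ * Fmat n
        * Matrix.fromBlocks A C 0 (E - D * A⁻¹ * C) = Fmat n := by
  have hdet : IsUnit A.det := (Matrix.isUnit_iff_isUnit_det A).mp hA
  have hAiA : A⁻¹ * A = 1 := Matrix.nonsing_inv_mul A hdet
  have hAAi : A * A⁻¹ = 1 := Matrix.mul_nonsing_inv A hdet
  have hAtiAt : A⁻¹ᵀ * Aᵀ = 1 := by rw [← Matrix.transpose_mul, hAAi, Matrix.transpose_one]
  have hAtAti : Aᵀ * A⁻¹ᵀ = 1 := by rw [← Matrix.transpose_mul, hAiA, Matrix.transpose_one]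
  simp only [Fmat, fromBlocks_transpose, fromBlocks_multiply, Matrix.fromBlocks_inj,
    Matrix.mul_zero, Matrix.zero_mul, Matrix.mul_one, Matrix.one_mul, add_zero, zero_add,
    Matrix.mul_neg, Matrix.neg_mul, neg_zero, Matrix.transpose_one, Matrix.transpose_zero,
    Matrix.transpose_sub, Matrix.transpose_mul] at hZ ⊢
  obtain ⟨h1, h2, h3, h4⟩ := hZ
  have key : Jmat n * D * A⁻¹ = A⁻¹ᵀ * Dᵀ * Jmat n := by
    calc Jmat n * D * A⁻¹ = A⁻¹ᵀ * (Aᵀ * (Jmat n * D * A⁻¹)) := by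
          rw [← Matrix.mul_assoc, hAtiAt, Matrix.one_mul]
      _ = A⁻¹ᵀ * (Dᵀ * (Jmat n * (A * A⁻¹))) := by
          congr 1
          linear_combination (norm := noncomm_ring) h1 * A⁻¹
      _ = A⁻¹ᵀ * Dᵀ * Jmat n := by rw [hAAi, Matrix.mul_one, Matrix.mul_assoc]
  refine ⟨⟨trivial, trivial, ?_, ?_⟩, ⟨?_, trivial, trivial, trivial⟩, ⟨trivial, ?_, ?_, ?_⟩⟩
  · linear_combination (norm := noncomm_ring) -(D * hAiA)
  · noncomm_ring
  · linear_combination (norm := noncomm_ring) key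
  · linear_combination (norm := noncomm_ring) h2 - h1 * (A⁻¹ * C) - Dᵀ * (Jmat n) * hAAi * C
  · linear_combination (norm := noncomm_ring) h3 - Cᵀ * key * A + Cᵀ * (Jmat n) * D * hAiA
  · linear_combination (norm := noncomm_ring) h4 - Cᵀ * key * C
end

section
/- Let Z = [[A,C],[D,E]] satisfy Z^T F Z = F with A invertible. Then J (A^{-1}C)^T J = A^{-1}C, i.e., A^{-1}C is persymmetric. -/
open Matrix

lemma Jmat_eq (n : ℕ) : Jmat n = (1 : Matrix (Fin n) (Fin n) ℂ).submatrix id ⇑(Fin.revPerm) := by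
  ext i j
  simp only [Jmat, Matrix.of_apply, Matrix.submatrix_apply, id, Matrix.one_apply,
    Fin.revPerm_apply]
  have hj : (j : ℕ) < n := j.isLt
  have hrev : (Fin.rev j : ℕ) = n - 1 - (j : ℕ) := Fin.val_rev j ▸ by omega
  by_cases h : (i : ℕ) + (j : ℕ) + 1 = n
  · rw [if_pos h, if_pos (Fin.ext (by omega))]
  · rw [if_neg h, if_neg]
    intro hij
    apply h
    have := congrArg Fin.val hij
    omega

lemma Jmat_eq' (n : ℕ) : Jmat n = (1 : Matrix (Fin n) (Fin n) ℂ).submatrix ⇑(Fin.revPerm) id := by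
  ext i j
  simp only [Jmat, Matrix.of_apply, Matrix.submatrix_apply, id, Matrix.one_apply,
    Fin.revPerm_apply]
  have hi : (i : ℕ) < n := i.isLt
  have hrev : (Fin.rev i : ℕ) = n - 1 - (i : ℕ) := Fin.val_rev i ▸ by omega
  by_cases h : (i : ℕ) + (j : ℕ) + 1 = n
  · rw [if_pos h, if_pos (Fin.ext (by omega))]
  · rw [if_neg h, if_neg]
    intro hij
    apply h
    have := congrArg Fin.val hij
    omega

lemma Jmat_sq (n : ℕ) : Jmat n * Jmat n = 1 := by
  nth_rewrite 2 [Jmat_eq' n]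
  rw [Jmat_eq n]
  rw [Matrix.submatrix_mul_equiv (1 : Matrix (Fin n) (Fin n) ℂ) 1 id Fin.revPerm id]
  simp

lemma Jmat_symm (n : ℕ) : (Jmat n)ᵀ = Jmat n := by
  ext i j
  simp only [Jmat, Matrix.transpose_apply, Matrix.of_apply]
  by_cases h : (i : ℕ) + (j : ℕ) + 1 = n
  · rw [if_pos (by omega), if_pos h]
  · rw [if_neg (by omega), if_neg h]

theorem stmt8 (n : ℕ) (A C D E : Matrix (Fin n) (Fin n) ℂ)
    (hZ : (Matrix.fromBlocks A C D E)ᵀ * Fmat n * Matrix.fromBlocks A C D E = Fmat n)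
    (hA : IsUnit A) :
    Jmat n * (A⁻¹ * C)ᵀ * Jmat n = A⁻¹ * C := by
  set J := Jmat n with hJ
  set Z := Matrix.fromBlocks A C D E with hZdef
  have hF2 : Fmat n * Fmat n = -1 := by
    have h1 : (-1 : Matrix (Fin n ⊕ Fin n) (Fin n ⊕ Fin n) ℂ)
        = Matrix.fromBlocks (-1) 0 0 (-1) := by
      rw [← Matrix.fromBlocks_one, Matrix.fromBlocks_neg]
      simp
    rw [h1]
    simp [Fmat, Matrix.fromBlocks_multiply, Jmat_sq]
  -- inverse of Z
  have hYZ : ((-(Fmat n)) * Zᵀ * Fmat n) * Z = 1 := by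
    calc ((-(Fmat n)) * Zᵀ * Fmat n) * Z = (-(Fmat n)) * (Zᵀ * Fmat n * Z) := by
          noncomm_ring
      _ = (-(Fmat n)) * Fmat n := by rw [hZ]
      _ = 1 := by rw [neg_mul, hF2]; simp
  have hZY : Z * ((-(Fmat n)) * Zᵀ * Fmat n) = 1 := mul_eq_one_comm.mp hYZ
  have h2 : Z * Fmat n * Zᵀ = Fmat n := by
    have h4 : Z * ((-(Fmat n)) * Zᵀ * Fmat n) * Fmat n = Fmat n := by rw [hZY, one_mul]
    have h5 : Z * (-(Fmat n)) * Zᵀ * (Fmat n * Fmat n) = Fmat n := by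
      linear_combination (norm := noncomm_ring) h4
    rw [hF2] at h5
    linear_combination (norm := noncomm_ring) h5
  -- extract block (1,1) of h2
  have h3 : A * J * Cᵀ = C * J * Aᵀ := by
    rw [hZdef] at h2
    rw [show Fmat n = Matrix.fromBlocks 0 J (-J) 0 from rfl] at h2
    rw [Matrix.fromBlocks_transpose, Matrix.fromBlocks_multiply,
      Matrix.fromBlocks_multiply] at h2
    have h11 := (Matrix.fromBlocks_inj.mp h2).1
    -- h11 : (A*0 + C*(-J)) * Aᵀ + (A*J + C*0) * Cᵀ = 0
    simp only [Matrix.mul_zero, Matrix.zero_mul, add_zero, zero_add, Matrix.mul_neg,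
      Matrix.neg_mul] at h11
    linear_combination (norm := noncomm_ring) h11
  have hAdet : IsUnit A.det := (Matrix.isUnit_iff_isUnit_det A).mp hA
  have hAinv : A⁻¹ * A = 1 := Matrix.nonsing_inv_mul A hAdet
  have hATinv : Aᵀ * (A⁻¹)ᵀ = 1 := by
    rw [Matrix.transpose_nonsing_inv, Matrix.mul_nonsing_inv]
    rwa [Matrix.det_transpose]
  have key : J * Cᵀ * (A⁻¹)ᵀ = A⁻¹ * C * J := by
    calc J * Cᵀ * (A⁻¹)ᵀ = A⁻¹ * (A * J * Cᵀ) * (A⁻¹)ᵀ := by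
          simp only [← Matrix.mul_assoc]
          rw [hAinv, Matrix.one_mul]
      _ = A⁻¹ * (C * J * Aᵀ) * (A⁻¹)ᵀ := by rw [h3]
      _ = A⁻¹ * C * J * (Aᵀ * (A⁻¹)ᵀ) := by noncomm_ring
      _ = A⁻¹ * C * J := by rw [hATinv, Matrix.mul_one]
  calc J * (A⁻¹ * C)ᵀ * J = J * (Cᵀ * (A⁻¹)ᵀ) * J := by rw [Matrix.transpose_mul]
    _ = (J * Cᵀ * (A⁻¹)ᵀ) * J := by noncomm_ring
    _ = A⁻¹ * C * J * J := by rw [key]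
    _ = A⁻¹ * C := by rw [Matrix.mul_assoc, hJ, Jmat_sq, Matrix.mul_one]
end

section
/- Let w = (a_1,...,a_{2n}) ∈ S_{2n} satisfy a_i = 2n+1-a_{2n+1-i} for all i, and let m_w = #{i ≤ n : a_i > n}. Then the length of w as an element of the type-C Weyl group W_G (generated by s_i = r_i r_{2n-i} for 1 ≤ i ≤ n−1 and s_n = r_n, where r_j is the transposition (j,j+1) in S_{2n}) equals (ℓ_{S_{2n}}(w) + m_w)/2, where ℓ_{S_{2n}} is the Coxeter length in S_{2n}. -/
open Equiv

/-- An element of `Fin (2*n)` from a natural number (taken mod `2*n`). -/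
def fmk (n : ℕ) (hn : 0 < n) (i : ℕ) : Fin (2 * n) :=
  ⟨i % (2 * n), Nat.mod_lt _ (by omega)⟩

/-- The transposition `r_j = (j, j+1)` of `S_{2n}`, `j` given in 1-based indexing. -/
def rr (n : ℕ) (hn : 0 < n) (j : ℕ) : Equiv.Perm (Fin (2 * n)) :=
  Equiv.swap (fmk n hn (j - 1)) (fmk n hn j)

/-- The Coxeter generators of `S_{2n}` (adjacent transpositions). -/
def genA (n : ℕ) (hn : 0 < n) : Set (Equiv.Perm (Fin (2 * n))) :=
  {p | ∃ j, 1 ≤ j ∧ j ≤ 2 * n - 1 ∧ p = rr n hn j}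

/-- The type `C` simple reflections: `s_i = r_i r_{2n-i}` for `1 ≤ i ≤ n-1`, and `s_n = r_n`. -/
def genC (n : ℕ) (hn : 0 < n) : Set (Equiv.Perm (Fin (2 * n))) :=
  {p | (∃ i, 1 ≤ i ∧ i ≤ n - 1 ∧ p = rr n hn i * rr n hn (2 * n - i)) ∨ p = rr n hn n}

/-- Minimal length of a word in a generating set `S` expressing `w`. -/
noncomputable def wordLength {G : Type*} [Group G] (S : Set G) (w : G) : ℕ :=
  sInf {l : ℕ | ∃ L : List G, L.length = l ∧ (∀ x ∈ L, x ∈ S) ∧ L.prod = w}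

/-!
Both lengths are read off from length functions. Left multiplication by an adjacent
transposition changes the inversion number by exactly one, and every non-identity permutation
has an adjacent descent, so the word length in `S_{2n}` is the inversion number. For a
permutation commuting with `i ↦ 2n+1-i`, a type `C` generator changes `inv + m` by at most two;
conversely a descent can be moved into the left half by the symmetry, and then either the pair
of mirrored transpositions through it (which lowers `inv` by two and fixes `m`) or the middle
transposition `r_n` (which lowers `inv` and `m` by one each) lowers `inv + m` by exactly two
and keeps the symmetry. Hence `2 ℓ_C = inv + m`.
-/

open Finset

namespace Equiv.Perm

variable {α : Type*} [LinearOrder α]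

theorem swap_lt_swap_iff_of_covBy {a b : α} (hab : a ⋖ b) (x y : α) :
    swap a b x < swap a b y ↔ (x < y ∧ ¬(x = a ∧ y = b)) ∨ (x = b ∧ y = a) := by
  have hlt := hab.lt
  have hcov : ∀ c, a < c → ¬c < b := fun c => @hab.2 c
  simp only [swap_apply_def]
  split_ifs <;> grind

variable [Fintype α]

def inversions (w : Perm α) : Finset (α × α) :=
  univ.filter fun p => p.1 < p.2 ∧ w p.2 < w p.1

def numInversions (w : Perm α) : ℕ := #w.inversions

@[simp]
theorem numInversions_one : numInversions (1 : Perm α) = 0 :=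
  card_eq_zero.2 <| filter_eq_empty_iff.2 fun _ _ h => lt_asymm h.1 h.2

theorem inversions_swap_mul_of_lt {a b : α} (hab : a ⋖ b) {w : Perm α}
    (h : w⁻¹ a < w⁻¹ b) :
    (swap a b * w).inversions = insert (w⁻¹ a, w⁻¹ b) w.inversions := by
  ext ⟨i, j⟩
  simp only [inversions, mem_filter, mem_univ, true_and, mem_insert, Prod.mk.injEq, mul_apply,
    swap_lt_swap_iff_of_covBy hab]
  obtain ⟨a, rfl⟩ := w.surjective a
  obtain ⟨b, rfl⟩ := w.surjective b
  simp only [coe_inv, symm_apply_apply, w.injective.eq_iff] at h ⊢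
  have := hab.lt
  grind

theorem numInversions_swap_mul_of_lt {a b : α} (hab : a ⋖ b) {w : Perm α}
    (h : w⁻¹ a < w⁻¹ b) :
    (swap a b * w).numInversions = w.numInversions + 1 := by
  rw [numInversions, inversions_swap_mul_of_lt hab h, card_insert_of_notMem]
  · rfl
  simp [inversions, hab.lt.le]

theorem numInversions_swap_mul_of_gt {a b : α} (hab : a ⋖ b) {w : Perm α}
    (h : w⁻¹ b < w⁻¹ a) :
    (swap a b * w).numInversions + 1 = w.numInversions := by
  have h' : (swap a b * w)⁻¹ a < (swap a b * w)⁻¹ b := by simpa [swap_inv] using h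
  simpa [← mul_assoc] using (numInversions_swap_mul_of_lt hab h').symm

theorem numInversions_swap_mul_le {a b : α} (hab : a ⋖ b) (w : Perm α) :
    (swap a b * w).numInversions ≤ w.numInversions + 1 := by
  rcases lt_or_gt_of_ne (w⁻¹.injective.ne hab.lt.ne) with h | h
  · rw [numInversions_swap_mul_of_lt hab h]
  · rw [← numInversions_swap_mul_of_gt hab h]; omega

theorem exists_covBy_inv_lt [SuccOrder α] {w : Perm α} (hw : w ≠ 1) :
    ∃ a b, a ⋖ b ∧ w⁻¹ b < w⁻¹ a := by
  by_contra! h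
  have hmono : StrictMono ⇑w⁻¹ := strictMono_of_lt_succ fun a ha =>
    (h a _ (Order.covBy_succ_of_not_isMax ha)).lt_of_ne
      (w⁻¹.injective.ne (Order.lt_succ_of_not_isMax ha).ne)
  exact hw (inv_eq_one.mp (Equiv.ext fun x => congrFun hmono.eq_id x))

end Equiv.Perm

section WordLength

variable {G : Type*} [Group G] {S : Set G} (f : G → ℕ) {k : ℕ}

theorem le_mul_length_of_forall_mem (hf_one : f 1 = 0)
    (hf_mul : ∀ s ∈ S, ∀ g, f (s * g) ≤ f g + k) {L : List G} (hL : ∀ x ∈ L, x ∈ S) :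
    f L.prod ≤ k * L.length := by
  induction L with
  | nil => simp [hf_one]
  | cons s L ih =>
    rw [List.prod_cons, List.length_cons, mul_add_one]
    have := hf_mul s (hL s List.mem_cons_self) L.prod
    have := ih fun x hx => hL x (List.mem_cons_of_mem s hx)
    omega

theorem exists_word_mul_length_eq (hk : 0 < k) (hf_one : f 1 = 0) {P : G → Prop}
    (hdesc : ∀ g, P g → g ≠ 1 → ∃ s ∈ S, P (s⁻¹ * g) ∧ f (s⁻¹ * g) + k = f g)
    {w : G} (hw : P w) :
    ∃ L : List G, (∀ x ∈ L, x ∈ S) ∧ L.prod = w ∧ k * L.length = f w := by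
  induction hN : f w using Nat.strong_induction_on generalizing w with
  | _ N ih =>
    rcases eq_or_ne w 1 with rfl | hw1
    · exact ⟨[], by simp, rfl, by simp [hf_one, ← hN]⟩
    obtain ⟨s, hs, hv, hfv⟩ := hdesc w hw hw1
    obtain ⟨L, hLS, hLv, hL⟩ := ih _ (by omega) hv rfl
    refine ⟨s :: L, ?_, by rw [List.prod_cons, hLv, mul_inv_cancel_left], ?_⟩
    · simpa using ⟨hs, hLS⟩
    · rw [List.length_cons, mul_add_one]; omega

theorem mul_wordLength_eq (hk : 0 < k) (hf_one : f 1 = 0)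
    (hf_mul : ∀ s ∈ S, ∀ g, f (s * g) ≤ f g + k) {P : G → Prop}
    (hdesc : ∀ g, P g → g ≠ 1 → ∃ s ∈ S, P (s⁻¹ * g) ∧ f (s⁻¹ * g) + k = f g)
    {w : G} (hw : P w) : k * wordLength S w = f w := by
  obtain ⟨L, hLS, hLw, hL⟩ := exists_word_mul_length_eq f hk hf_one hdesc hw
  have hleast : IsLeast {l | ∃ L : List G, L.length = l ∧ (∀ x ∈ L, x ∈ S) ∧ L.prod = w}
      L.length := by
    refine ⟨⟨L, rfl, hLS, hLw⟩, ?_⟩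
    rintro _ ⟨L', rfl, hL'S, rfl⟩
    have := le_mul_length_of_forall_mem f hf_one hf_mul hL'S
    exact le_of_mul_le_mul_left (hL ▸ this) hk
  rw [wordLength, hleast.csInf_eq, hL]

theorem Equiv.Perm.wordLength_covBy_swaps {α : Type*} [LinearOrder α] [Fintype α]
    [SuccOrder α] (w : Perm α) :
    wordLength {p | ∃ a b : α, a ⋖ b ∧ swap a b = p} w = w.numInversions := by
  have h := mul_wordLength_eq (S := {p | ∃ a b : α, a ⋖ b ∧ swap a b = p}) numInversions
    one_pos numInversions_one ?_ (P := fun _ => True) ?_ (w := w) trivial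
  · simpa using h
  · rintro _ ⟨a, b, hab, rfl⟩ g
    exact numInversions_swap_mul_le hab g
  · intro g _ hg
    obtain ⟨a, b, hab, hlt⟩ := exists_covBy_inv_lt hg
    exact ⟨swap a b, ⟨a, b, hab, rfl⟩, trivial,
      by rw [swap_inv, numInversions_swap_mul_of_gt hab hlt]⟩

end WordLength

section RevSymmetric

variable {M : ℕ}

theorem Fin.rev_covBy_rev {a b : Fin M} (h : a ⋖ b) : Fin.rev b ⋖ Fin.rev a := by
  simp only [Fin.covBy_iff, Nat.covBy_iff_add_one_eq, Fin.val_rev] at h ⊢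
  omega

theorem commute_revPerm_iff {w : Perm (Fin M)} :
    Commute w Fin.revPerm ↔ ∀ x, w (Fin.rev x) = Fin.rev (w x) := by
  simp [Commute, SemiconjBy, Perm.ext_iff]

theorem Commute.inv_apply_rev {w : Perm (Fin M)} (hw : Commute w Fin.revPerm) (x : Fin M) :
    w⁻¹ (Fin.rev x) = Fin.rev (w⁻¹ x) :=
  commute_revPerm_iff.1 hw.inv_left x

theorem swap_rev_rev_eq_conj (a b : Fin M) :
    swap (Fin.rev a) (Fin.rev b) = Fin.revPerm * swap a b * Fin.revPerm⁻¹ :=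
  swap_apply_apply Fin.revPerm a b

theorem commute_of_conj_eq {G : Type*} [Group G] {s r : G} (h : r * s * r⁻¹ = s) :
    Commute s r :=
  (mul_inv_eq_iff_eq_mul.1 h).symm

theorem commute_swap_rev_revPerm (a : Fin M) : Commute (swap a (Fin.rev a)) Fin.revPerm :=
  commute_of_conj_eq <| by rw [← swap_rev_rev_eq_conj, Fin.rev_rev, swap_comm]

theorem commute_swap_mul_swap_rev_revPerm {a b : Fin M}
    (h : [a, b, Fin.rev b, Fin.rev a].Nodup) :
    Commute (swap a b * swap (Fin.rev b) (Fin.rev a)) Fin.revPerm := by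
  refine commute_of_conj_eq ?_
  rw [← conj_mul, ← swap_rev_rev_eq_conj, ← swap_rev_rev_eq_conj, Fin.rev_rev, Fin.rev_rev,
    swap_comm b, swap_comm (Fin.rev a)]
  exact (Perm.Disjoint.commute (Perm.disjoint_swap_swap h)).eq.symm

end RevSymmetric

section Generators

variable {n : ℕ} (hn : 0 < n)

theorem rr_eq_swap {j : ℕ} (a b : Fin (2 * n)) (ha : (a : ℕ) + 1 = j) (hb : (b : ℕ) = j) :
    rr n hn j = swap a b := by
  have hj : j < 2 * n := hb ▸ b.isLt
  rw [rr]
  congr 1 <;> ext <;> simp only [fmk] <;> rw [Nat.mod_eq_of_lt (by omega)] <;> omega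

theorem genA_eq : genA n hn = {p | ∃ a b : Fin (2 * n), a ⋖ b ∧ swap a b = p} := by
  ext p
  simp only [genA, Set.mem_ofPred_eq, Fin.covBy_iff, Nat.covBy_iff_add_one_eq]
  constructor
  · rintro ⟨j, hj1, hj2, rfl⟩
    exact ⟨⟨j - 1, by omega⟩, ⟨j, by omega⟩, by simp only; omega,
      (rr_eq_swap hn _ _ (by simp only; omega) rfl).symm⟩
  · rintro ⟨a, b, hab, rfl⟩
    exact ⟨b, by omega, by omega, (rr_eq_swap hn a b hab rfl).symm⟩

theorem genC_eq : genC n hn =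
    {p | ∃ a b : Fin (2 * n), a ⋖ b ∧ (b : ℕ) < n ∧ swap a b * swap b.rev a.rev = p} ∪
      {p | ∃ a : Fin (2 * n), a ⋖ a.rev ∧ swap a a.rev = p} := by
  ext p
  simp only [genC, Set.mem_union, Set.mem_ofPred_eq, Fin.covBy_iff, Nat.covBy_iff_add_one_eq,
    Fin.val_rev]
  constructor
  · rintro (⟨i, hi1, hi2, rfl⟩ | rfl)
    · let a : Fin (2 * n) := ⟨i - 1, by omega⟩
      let b : Fin (2 * n) := ⟨i, by omega⟩
      refine .inl ⟨a, b, show i - 1 + 1 = i by omega, show i < n by omega, ?_⟩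
      rw [rr_eq_swap hn a b (show i - 1 + 1 = i by omega) rfl,
        rr_eq_swap hn b.rev a.rev (by simp only [b, Fin.val_rev]; omega)
          (by simp only [a, Fin.val_rev]; omega)]
    · let a : Fin (2 * n) := ⟨n - 1, by omega⟩
      refine .inr ⟨a, by simp only [a]; omega, ?_⟩
      rw [rr_eq_swap hn a a.rev (by simp only [a]; omega) (by simp only [a, Fin.val_rev]; omega)]
  · rintro (⟨a, b, hab, hb, rfl⟩ | ⟨a, ha, rfl⟩)
    · refine .inl ⟨b, by omega, by omega, ?_⟩
      rw [rr_eq_swap hn a b hab rfl, rr_eq_swap hn b.rev a.rev (by simp only [Fin.val_rev]; omega)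
        (by simp only [Fin.val_rev]; omega)]
    · exact .inr (rr_eq_swap hn a a.rev (by omega) (by simp only [Fin.val_rev]; omega)).symm

end Generators

theorem wordLength_genA {n : ℕ} (hn : 0 < n) (w : Perm (Fin (2 * n))) :
    wordLength (genA n hn) w = w.numInversions := by
  rw [genA_eq, Perm.wordLength_covBy_swaps]

section NumNeg

variable {n : ℕ}

/-- The paper's `m_w`: viewing `w` as a signed permutation of `{1, …, n}`, its number of
negative entries. -/
def numNeg (n : ℕ) (w : Perm (Fin (2 * n))) : ℕ :=
  (univ.filter fun i : Fin (2 * n) => (i : ℕ) < n ∧ n ≤ (w i : ℕ)).card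

@[simp]
theorem numNeg_one : numNeg n 1 = 0 := by
  refine card_eq_zero.2 <| filter_eq_empty_iff.2 fun i _ => ?_
  simp only [Perm.one_apply]
  omega

theorem numNeg_swap_mul_of_iff {a b : Fin (2 * n)} (hab : (a : ℕ) < n ↔ (b : ℕ) < n)
    (w : Perm (Fin (2 * n))) : numNeg n (swap a b * w) = numNeg n w := by
  unfold numNeg
  congr 1
  refine filter_congr fun i _ => ?_
  simp only [Perm.mul_apply, swap_apply_def]
  split_ifs <;> grind

theorem numNeg_swap_mul_le {a b : Fin (2 * n)} (hb : n ≤ (b : ℕ)) (w : Perm (Fin (2 * n))) :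
    numNeg n (swap a b * w) ≤ numNeg n w + 1 := by
  obtain ⟨a, rfl⟩ := w.surjective a
  refine (card_le_card fun i => ?_).trans (card_insert_le a _)
  rw [mem_filter, mem_insert, mem_filter]
  simp only [mem_univ, true_and, Perm.mul_apply, swap_apply_def, w.injective.eq_iff]
  split_ifs <;> omega

theorem numNeg_swap_mul_add_one {a b : Fin (2 * n)} (ha : (a : ℕ) < n) (hb : n ≤ (b : ℕ))
    {w : Perm (Fin (2 * n))} (hwb : (w⁻¹ b : ℕ) < n) (hwa : n ≤ (w⁻¹ a : ℕ)) :
    numNeg n (swap a b * w) + 1 = numNeg n w := by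
  obtain ⟨a, rfl⟩ := w.surjective a
  obtain ⟨b, rfl⟩ := w.surjective b
  simp only [Perm.coe_inv, symm_apply_apply] at hwa hwb
  rw [numNeg, numNeg, ← card_insert_of_notMem (a := b)]
  · congr 1
    ext i
    rw [mem_insert, mem_filter, mem_filter]
    simp only [mem_univ, true_and, Perm.mul_apply, swap_apply_def, w.injective.eq_iff]
    split_ifs <;> grind
  · rw [mem_filter]
    simp only [mem_univ, true_and, Perm.mul_apply, swap_apply_right]
    omega

end NumNeg

section TypeC

variable {n : ℕ} (hn : 0 < n)

theorem numInversions_add_numNeg_genC_mul_le {s : Perm (Fin (2 * n))} (hs : s ∈ genC n hn)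
    (w : Perm (Fin (2 * n))) :
    (s * w).numInversions + numNeg n (s * w) ≤ w.numInversions + numNeg n w + 2 := by
  rw [genC_eq] at hs
  rcases hs with ⟨a, b, hab, hb, rfl⟩ | ⟨a, ha, rfl⟩
  · have hab' := Fin.covBy_iff.1 hab
    simp only [Nat.covBy_iff_add_one_eq] at hab'
    rw [mul_assoc, numNeg_swap_mul_of_iff (a := a) (b := b) (by omega),
      numNeg_swap_mul_of_iff (a := b.rev) (b := a.rev) (by simp only [Fin.val_rev]; omega)]
    have := Perm.numInversions_swap_mul_le hab (swap b.rev a.rev * w)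
    have := Perm.numInversions_swap_mul_le (Fin.rev_covBy_rev hab) w
    omega
  · have ha' := Fin.covBy_iff.1 ha
    simp only [Nat.covBy_iff_add_one_eq, Fin.val_rev] at ha'
    have := Perm.numInversions_swap_mul_le ha w
    have := numNeg_swap_mul_le (a := a) (b := a.rev) (by simp only [Fin.val_rev]; omega) w
    omega

theorem exists_covBy_inv_lt_of_lt_half {w : Perm (Fin (2 * n))} (hw : Commute w Fin.revPerm)
    (h1 : w ≠ 1) : ∃ a b : Fin (2 * n), a ⋖ b ∧ (a : ℕ) < n ∧ w⁻¹ b < w⁻¹ a := by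
  obtain ⟨a, b, hab, hlt⟩ := Perm.exists_covBy_inv_lt h1
  by_cases ha : (a : ℕ) < n
  · exact ⟨a, b, hab, ha, hlt⟩
  · refine ⟨b.rev, a.rev, Fin.rev_covBy_rev hab, ?_, ?_⟩
    · have hab' := Fin.covBy_iff.1 hab
      simp only [Nat.covBy_iff_add_one_eq] at hab'
      simp only [Fin.val_rev]; omega
    · rwa [hw.inv_apply_rev, hw.inv_apply_rev, Fin.rev_lt_rev]

theorem exists_genC_descent {w : Perm (Fin (2 * n))} (hw : Commute w Fin.revPerm)
    (h1 : w ≠ 1) :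
    ∃ s ∈ genC n hn, Commute (s⁻¹ * w) Fin.revPerm ∧
      (s⁻¹ * w).numInversions + numNeg n (s⁻¹ * w) + 2 = w.numInversions + numNeg n w := by
  obtain ⟨a, b, hab, ha, hlt⟩ := exists_covBy_inv_lt_of_lt_half hw h1
  have hab' := Fin.covBy_iff.1 hab
  simp only [Nat.covBy_iff_add_one_eq] at hab'
  rcases Nat.lt_or_ge (b : ℕ) n with hb | hb
  · have hnodup : [a, b, b.rev, a.rev].Nodup := by
      simp only [List.nodup_cons, List.mem_cons, List.not_mem_nil, List.nodup_nil, or_false,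
        Fin.ext_iff, Fin.val_rev, not_false_eq_true, and_true]
      omega
    have hcomm := commute_swap_mul_swap_rev_revPerm hnodup
    refine ⟨_, by rw [genC_eq]; exact .inl ⟨a, b, hab, hb, rfl⟩,
      hcomm.inv_left.mul_left hw, ?_⟩
    rw [mul_inv_rev, swap_inv, swap_inv, mul_assoc,
      numNeg_swap_mul_of_iff (a := b.rev) (b := a.rev) (by simp only [Fin.val_rev]; omega),
      numNeg_swap_mul_of_iff (a := a) (b := b) (by omega)]
    have h2 : (swap a b * w)⁻¹ a.rev < (swap a b * w)⁻¹ b.rev := by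
      have hne (x : Fin (2 * n)) (hx : (x : ℕ) < n) : x.rev ≠ a ∧ x.rev ≠ b := by
        simp only [ne_eq, Fin.ext_iff, Fin.val_rev]; omega
      rw [mul_inv_rev, swap_inv, Perm.mul_apply, Perm.mul_apply,
        swap_apply_of_ne_of_ne (hne a ha).1 (hne a ha).2,
        swap_apply_of_ne_of_ne (hne b hb).1 (hne b hb).2, hw.inv_apply_rev, hw.inv_apply_rev,
        Fin.rev_lt_rev]
      exact hlt
    have := Perm.numInversions_swap_mul_of_gt (Fin.rev_covBy_rev hab) h2
    have := Perm.numInversions_swap_mul_of_gt hab hlt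
    omega
  · have hba : b = a.rev := Fin.ext (by simp only [Fin.val_rev]; omega)
    subst hba
    refine ⟨_, by rw [genC_eq]; exact .inr ⟨a, hab, rfl⟩,
      (commute_swap_rev_revPerm a).inv_left.mul_left hw, ?_⟩
    rw [swap_inv]
    have hpos : n ≤ (w⁻¹ a : ℕ) := by
      rw [hw.inv_apply_rev, Fin.lt_def, Fin.val_rev] at hlt
      omega
    have := Perm.numInversions_swap_mul_of_gt hab hlt
    have := numNeg_swap_mul_add_one (b := a.rev) ha (by simp only [Fin.val_rev]; omega)
      (by rw [hw.inv_apply_rev, Fin.val_rev]; omega) hpos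
    omega

theorem two_mul_wordLength_genC {w : Perm (Fin (2 * n))} (hw : Commute w Fin.revPerm) :
    2 * wordLength (genC n hn) w = w.numInversions + numNeg n w :=
  mul_wordLength_eq (fun v => v.numInversions + numNeg n v) two_pos (by simp)
    (fun _ hs v => numInversions_add_numNeg_genC_mul_le hn hs v)
    (fun _ hv hv1 => exists_genC_descent hn hv hv1) hw

end TypeC

theorem stmt14 (n : ℕ) (hn : 0 < n) (w : Equiv.Perm (Fin (2 * n)))
    (hw : ∀ i, w i = Fin.rev (w (Fin.rev i))) :
    2 * wordLength (genC n hn) w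
      = wordLength (genA n hn) w
        + (Finset.univ.filter fun i : Fin (2 * n) =>
            (i : ℕ) < n ∧ n ≤ (w i : ℕ)).card := by
  have hsym : Commute w Fin.revPerm :=
    commute_revPerm_iff.2 fun i => by rw [hw (Fin.rev i), Fin.rev_rev]
  rw [two_mul_wordLength_genC hn hsym, wordLength_genA]
  rfl
end

section
/- Consider the group G generated by the simple reflections s_i of S_{2n} defined by s_i = r_i r_{2n-i} for 1 ≤ i ≤ n−1 and s_n = r_n (r_j the transposition (j,j+1)). Then G equals {w ∈ S_{2n} : w(i) = 2n+1−w(2n+1−i) for all 1 ≤ i ≤ 2n}. -/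
open Equiv

namespace Stmt15Aux

lemma swap_comm' {m : ℕ} {a b c d : Fin m} (h1 : a ≠ c) (h2 : a ≠ d) (h3 : b ≠ c) (h4 : b ≠ d) :
    Equiv.swap a b * Equiv.swap c d = Equiv.swap c d * Equiv.swap a b := by
  ext i
  simp only [Equiv.Perm.mul_apply, Equiv.swap_apply_def]
  split_ifs <;> simp_all

variable {n : ℕ}

lemma rev_ne (a : Fin (2 * n)) : a.rev ≠ a := by
  intro h
  have := a.isLt
  have h2 : (Fin.rev a).val = a.val := by rw [h]
  rw [Fin.val_rev] at h2
  omega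

lemma rev_mk (i : ℕ) (h : i < 2 * n) :
    (⟨i, h⟩ : Fin (2 * n)).rev = ⟨2 * n - 1 - i, by omega⟩ := by
  ext; simp [Fin.rev]; omega

local notation "R" => (Fin.revPerm : Perm (Fin (2 * n)))

lemma R_mul_R : R * R = 1 := by
  ext i; simp [Equiv.Perm.mul_apply]

lemma R_inv : R⁻¹ = R := rfl

lemma RR_cancel (x : Perm (Fin (2 * n))) : R * (R * x) = x := by
  rw [← mul_assoc, R_mul_R, one_mul]

lemma conj_swap (a b : Fin (2 * n)) : R * Equiv.swap a b * R = Equiv.swap a.rev b.rev := by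
  have := Equiv.swap_apply_apply R a b
  simp only [Fin.revPerm_apply] at this
  rw [this, R_inv]

/-- The signed permutation subgroup: permutations commuting with reversal. -/
def HS (n : ℕ) : Subgroup (Perm (Fin (2 * n))) where
  carrier := {w | (Fin.revPerm : Perm (Fin (2 * n))) * w * Fin.revPerm = w}
  one_mem' := by
    show (Fin.revPerm : Perm (Fin (2 * n))) * 1 * Fin.revPerm = 1
    rw [mul_one, R_mul_R]
  mul_mem' := by
    intro a b ha hb
    show (Fin.revPerm : Perm (Fin (2 * n))) * (a * b) * Fin.revPerm = a * b
    calc (Fin.revPerm : Perm (Fin (2 * n))) * (a * b) * Fin.revPerm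
        = ((Fin.revPerm : Perm (Fin (2 * n))) * a * Fin.revPerm) *
          ((Fin.revPerm : Perm (Fin (2 * n))) * b * Fin.revPerm) := by
          simp only [mul_assoc, RR_cancel]
      _ = a * b := by rw [ha, hb]
  inv_mem' := by
    intro a ha
    show (Fin.revPerm : Perm (Fin (2 * n))) * a⁻¹ * Fin.revPerm = a⁻¹
    have h : (Fin.revPerm : Perm (Fin (2 * n))) * a * Fin.revPerm = a := ha
    have h2 := congrArg (·⁻¹) h
    simpa only [mul_inv_rev, R_inv, mul_assoc] using h2

lemma mem_HS' {w : Perm (Fin (2 * n))} : w ∈ HS n ↔ R * w * R = w := Iff.rfl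

lemma mem_HS_iff {w : Perm (Fin (2 * n))} :
    w ∈ HS n ↔ ∀ i, w i = Fin.rev (w (Fin.rev i)) := by
  rw [mem_HS']
  constructor
  · intro h i
    conv_lhs => rw [← h]
    simp [Equiv.Perm.mul_apply]
  · intro h
    apply Equiv.ext
    intro i
    simp only [Equiv.Perm.mul_apply, Fin.revPerm_apply]
    exact (h i).symm

lemma hs_rev {σ : Perm (Fin (2 * n))} (hσ : σ ∈ HS n) (a : Fin (2 * n)) :
    σ a.rev = (σ a).rev := by
  have h := (mem_HS_iff.mp hσ) a.rev
  rwa [Fin.rev_rev] at h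

/-- Signed transposition: swaps a↔b and rev a↔rev b. -/
def PP (a b : Fin (2 * n)) : Perm (Fin (2 * n)) :=
  Equiv.swap a b * Equiv.swap a.rev b.rev

lemma conj_PP {σ : Perm (Fin (2 * n))} (hσ : σ ∈ HS n) (a b : Fin (2 * n)) :
    σ * PP a b * σ⁻¹ = PP (σ a) (σ b) := by
  unfold PP
  rw [← hs_rev hσ a, ← hs_rev hσ b, Equiv.swap_apply_apply σ a b,
    Equiv.swap_apply_apply σ a.rev b.rev]
  group

lemma conj_U {σ : Perm (Fin (2 * n))} (hσ : σ ∈ HS n) (a : Fin (2 * n)) :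
    σ * Equiv.swap a a.rev * σ⁻¹ = Equiv.swap (σ a) (σ a).rev := by
  rw [← hs_rev hσ a]
  exact (Equiv.swap_apply_apply σ a a.rev).symm

lemma U_mem_HS (a : Fin (2 * n)) : Equiv.swap a a.rev ∈ HS n := by
  rw [mem_HS']
  rw [conj_swap, Fin.rev_rev, Equiv.swap_comm]

lemma ne_rev_symm {a b : Fin (2 * n)} (h : b ≠ a.rev) : a ≠ b.rev := by
  intro e; exact h (by rw [e, Fin.rev_rev])

lemma PP_mem_HS {a b : Fin (2 * n)} (hba : b ≠ a) (h : b ≠ a.rev) : PP a b ∈ HS n := by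
  rw [mem_HS']
  unfold PP
  calc R * (Equiv.swap a b * Equiv.swap a.rev b.rev) * R
      = (R * Equiv.swap a b * R) * (R * Equiv.swap a.rev b.rev * R) := by
        simp only [mul_assoc, RR_cancel]
    _ = Equiv.swap a.rev b.rev * Equiv.swap a b := by
        rw [conj_swap, conj_swap, Fin.rev_rev, Fin.rev_rev]
    _ = Equiv.swap a b * Equiv.swap a.rev b.rev := by
        exact (swap_comm' (rev_ne a).symm (ne_rev_symm h) h (rev_ne b).symm).symm

lemma PP_comm (a b : Fin (2 * n)) : PP a b = PP b a := by
  unfold PP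
  rw [Equiv.swap_comm, Equiv.swap_comm a.rev]

lemma PP_rev {a b : Fin (2 * n)} (hba : b ≠ a) (h : b ≠ a.rev) : PP a.rev b.rev = PP a b := by
  unfold PP
  rw [Fin.rev_rev, Fin.rev_rev]
  exact swap_comm' (rev_ne a) (Ne.symm h) ((ne_rev_symm h).symm) (rev_ne b)

lemma PP_apply_fix {a b x : Fin (2 * n)} (h1 : x ≠ a) (h2 : x ≠ b) (h3 : x ≠ a.rev)
    (h4 : x ≠ b.rev) : PP a b x = x := by
  unfold PP
  rw [Equiv.Perm.mul_apply, Equiv.swap_apply_of_ne_of_ne h3 h4,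
    Equiv.swap_apply_of_ne_of_ne h1 h2]

lemma PP_apply_snd {a b : Fin (2 * n)} (h : b ≠ a.rev) : PP a b b = a := by
  unfold PP
  rw [Equiv.Perm.mul_apply, Equiv.swap_apply_of_ne_of_ne h (rev_ne b).symm,
    Equiv.swap_apply_right]

lemma PP_apply_fst {a b : Fin (2 * n)} (h : b ≠ a.rev) : PP a b a = b := by
  unfold PP
  rw [Equiv.Perm.mul_apply, Equiv.swap_apply_of_ne_of_ne (rev_ne a).symm (ne_rev_symm h),
    Equiv.swap_apply_left]

variable (hn : 0 < n)

lemma fmk_eq {i : ℕ} (h : i < 2 * n) : fmk n hn i = ⟨i, h⟩ := by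
  simp [fmk, Nat.mod_eq_of_lt h]

lemma rr_eq (j : ℕ) (h1 : 1 ≤ j) (h2 : j < 2 * n) :
    rr n hn j = Equiv.swap ⟨j - 1, by omega⟩ ⟨j, h2⟩ := by
  unfold rr
  rw [fmk_eq hn (show j - 1 < 2 * n by omega), fmk_eq hn h2]

lemma rr_prod (i : ℕ) (h1 : 1 ≤ i) (h2 : i + 1 ≤ n) :
    rr n hn i * rr n hn (2 * n - i) = PP ⟨i - 1, by omega⟩ ⟨i, by omega⟩ := by
  rw [rr_eq hn i h1 (by omega), rr_eq hn (2 * n - i) (by omega) (by omega)]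
  unfold PP
  rw [rev_mk, rev_mk]
  congr 1
  rw [Equiv.swap_comm]
  congr 1 <;> · apply Fin.ext; simp; omega

lemma genC_sub_HS : genC n hn ⊆ (HS n : Set (Perm (Fin (2 * n)))) := by
  rintro p (⟨i, h1, h2, rfl⟩ | rfl)
  · rw [rr_prod hn i h1 (by omega)]
    refine PP_mem_HS ?_ ?_
    · simp only [ne_eq, Fin.mk.injEq]; omega
    · rw [rev_mk]; simp only [ne_eq, Fin.mk.injEq]; omega
  · rw [rr_eq hn n hn (by omega)]
    have e : (⟨n, by omega⟩ : Fin (2 * n)) = (⟨n - 1, by omega⟩ : Fin (2 * n)).rev := by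
      rw [rev_mk]; apply Fin.ext; simp; omega
    rw [e]
    exact U_mem_HS _

lemma conj_U_mem {σ : Perm (Fin (2 * n))} (hσHS : σ ∈ HS n)
    (hσS : σ ∈ Subgroup.closure (genC n hn)) {b c : Fin (2 * n)}
    (hUS : Equiv.swap b b.rev ∈ Subgroup.closure (genC n hn)) (happ : σ b = c) :
    Equiv.swap c c.rev ∈ Subgroup.closure (genC n hn) := by
  rw [← happ, ← conj_U hσHS]
  exact Subgroup.mul_mem _ (Subgroup.mul_mem _ hσS hUS) (Subgroup.inv_mem _ hσS)

lemma conj_PP_mem {σ : Perm (Fin (2 * n))} (hσHS : σ ∈ HS n)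
    (hσS : σ ∈ Subgroup.closure (genC n hn)) {x y c d : Fin (2 * n)}
    (hPS : PP x y ∈ Subgroup.closure (genC n hn)) (hx : σ x = c) (hy : σ y = d) :
    PP c d ∈ Subgroup.closure (genC n hn) := by
  rw [← hx, ← hy, ← conj_PP hσHS]
  exact Subgroup.mul_mem _ (Subgroup.mul_mem _ hσS hPS) (Subgroup.inv_mem _ hσS)

lemma PP_adj_mem (a : ℕ) (h : a + 1 + 1 ≤ n) :
    PP (⟨a, by omega⟩ : Fin (2 * n)) ⟨a + 1, by omega⟩ ∈ genC n hn := by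
  left
  refine ⟨a + 1, by omega, by omega, ?_⟩
  rw [rr_prod hn (a + 1) (by omega) (by omega)]
  congr 1

set_option maxHeartbeats 1000000 in
lemma U_low_mem_S : ∀ k, k < n →
    Equiv.swap (⟨n - 1 - k, by omega⟩ : Fin (2 * n)) (⟨n - 1 - k, by omega⟩ : Fin (2 * n)).rev
      ∈ Subgroup.closure (genC n hn) := by
  intro k
  induction k with
  | zero =>
    intro _
    have e : Equiv.swap (⟨n - 1 - 0, by omega⟩ : Fin (2 * n))
        (⟨n - 1 - 0, by omega⟩ : Fin (2 * n)).rev = rr n hn n := by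
      rw [rr_eq hn n hn (by omega), rev_mk]
      congr 1 <;> · apply Fin.ext; simp; omega
    rw [e]
    exact Subgroup.subset_closure (Or.inr rfl)
  | succ k ih =>
    intro hk
    set a := n - 1 - (k + 1) with ha
    have hgen : PP (⟨a, by omega⟩ : Fin (2 * n)) ⟨a + 1, by omega⟩ ∈ genC n hn :=
      PP_adj_mem hn a (by omega)
    have htS : PP (⟨a, by omega⟩ : Fin (2 * n)) ⟨a + 1, by omega⟩ ∈ Subgroup.closure (genC n hn) :=
      Subgroup.subset_closure hgen
    have htHS : PP (⟨a, by omega⟩ : Fin (2 * n)) ⟨a + 1, by omega⟩ ∈ HS n := genC_sub_HS hn hgen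
    have ihs := ih (by omega)
    have e : (⟨n - 1 - k, by omega⟩ : Fin (2 * n)) = ⟨a + 1, by omega⟩ := Fin.ext (by simp; omega)
    rw [e] at ihs
    have happ : PP (⟨a, by omega⟩ : Fin (2 * n)) ⟨a + 1, by omega⟩ ⟨a + 1, by omega⟩
        = ⟨a, by omega⟩ := by
      apply PP_apply_snd
      rw [rev_mk]
      simp only [ne_eq, Fin.mk.injEq]
      omega
    exact conj_U_mem hn htHS htS ihs happ

lemma U_mem_S (a : Fin (2 * n)) : Equiv.swap a a.rev ∈ Subgroup.closure (genC n hn) := by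
  have low : ∀ b : Fin (2 * n), b.val < n → Equiv.swap b b.rev ∈ Subgroup.closure (genC n hn) := by
    intro b hb
    have e : b = ⟨n - 1 - (n - 1 - b.val), by omega⟩ := Fin.ext (by simp; omega)
    rw [e]
    exact U_low_mem_S hn (n - 1 - b.val) (by omega)
  rcases lt_or_ge a.val n with h | h
  · exact low a h
  · have e : Equiv.swap a a.rev = Equiv.swap a.rev a.rev.rev := by
      rw [Fin.rev_rev, Equiv.swap_comm]
    rw [e]
    refine low a.rev ?_
    rw [Fin.val_rev]
    omega

lemma T_low_mem_S (a b : ℕ) (hab : a < b) (hb : b < n) :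
    PP (⟨a, by omega⟩ : Fin (2 * n)) ⟨b, by omega⟩ ∈ Subgroup.closure (genC n hn) := by
  induction b, hab using Nat.le_induction with
  | base =>
    exact Subgroup.subset_closure (PP_adj_mem hn a (by omega))
  | succ b hab ih =>
    have ihs := ih (by omega)
    have hgen : PP (⟨b, by omega⟩ : Fin (2 * n)) ⟨b + 1, by omega⟩ ∈ genC n hn :=
      PP_adj_mem hn b (by omega)
    have htS := Subgroup.subset_closure hgen
    have htHS : PP (⟨b, by omega⟩ : Fin (2 * n)) ⟨b + 1, by omega⟩ ∈ HS n := genC_sub_HS hn hgen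
    have h1 : PP (⟨b, by omega⟩ : Fin (2 * n)) ⟨b + 1, by omega⟩ ⟨a, by omega⟩
        = ⟨a, by omega⟩ := by
      apply PP_apply_fix <;>
        · first
          | (simp only [ne_eq, Fin.mk.injEq]; omega)
          | (rw [rev_mk]; simp only [ne_eq, Fin.mk.injEq]; omega)
    have h2 : PP (⟨b, by omega⟩ : Fin (2 * n)) ⟨b + 1, by omega⟩ ⟨b, by omega⟩
        = ⟨b + 1, by omega⟩ := by
      apply PP_apply_fst
      rw [rev_mk]
      simp only [ne_eq, Fin.mk.injEq]
      omega
    exact conj_PP_mem hn htHS htS ihs h1 h2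

lemma T_mid_mem_S (a b : Fin (2 * n)) (ha : a.val < n) (h1 : b ≠ a) (h2 : b ≠ a.rev) :
    PP a b ∈ Subgroup.closure (genC n hn) := by
  rcases lt_or_ge b.val n with hb | hb
  · have hv : a.val ≠ b.val := fun e => h1 (Fin.ext e.symm)
    rcases Nat.lt_or_ge a.val b.val with hlt | hge
    · have e1 : a = ⟨a.val, by omega⟩ := Fin.ext rfl
      have e2 : b = ⟨b.val, by omega⟩ := Fin.ext rfl
      rw [e1, e2]
      exact T_low_mem_S hn a.val b.val hlt hb
    · have hlt : b.val < a.val := by omega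
      rw [PP_comm]
      have e1 : a = ⟨a.val, by omega⟩ := Fin.ext rfl
      have e2 : b = ⟨b.val, by omega⟩ := Fin.ext rfl
      rw [e1, e2]
      exact T_low_mem_S hn b.val a.val hlt ha
  · set b' := b.rev with hb'
    have hb'v : b'.val < n := by rw [hb', Fin.val_rev]; omega
    have hb'a : b' ≠ a := fun e => h2 (by rw [← e, hb', Fin.rev_rev])
    have hb'ar : b' ≠ a.rev := fun e => h1 (by
      have := congrArg Fin.rev e
      rwa [hb', Fin.rev_rev, Fin.rev_rev] at this)
    have hUa : Equiv.swap a a.rev ∈ HS n := U_mem_HS a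
    have e1 : Equiv.swap a a.rev a = a.rev := Equiv.swap_apply_left a a.rev
    have e2 : Equiv.swap a a.rev b' = b' :=
      Equiv.swap_apply_of_ne_of_ne hb'a hb'ar
    have hrev : PP a.rev b' = PP a b := by
      have h3 : b' ≠ a.rev.rev := by rwa [Fin.rev_rev]
      have := PP_rev (a := a.rev) (b := b') hb'ar h3
      rw [Fin.rev_rev] at this
      rw [← this, hb', Fin.rev_rev]
    rw [← hrev]
    have hPab' : PP a b' ∈ Subgroup.closure (genC n hn) := by
      rcases lt_or_ge b'.val n with hbb | hbb
      · have hv : a.val ≠ b'.val := fun e => hb'a (Fin.ext e.symm)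
        rcases Nat.lt_or_ge a.val b'.val with hlt | hge
        · have e1 : a = ⟨a.val, by omega⟩ := Fin.ext rfl
          have e2 : b' = ⟨b'.val, by omega⟩ := Fin.ext rfl
          rw [e1, e2]
          exact T_low_mem_S hn a.val b'.val hlt hbb
        · have hlt : b'.val < a.val := by omega
          rw [PP_comm]
          have e1 : a = ⟨a.val, by omega⟩ := Fin.ext rfl
          have e2 : b' = ⟨b'.val, by omega⟩ := Fin.ext rfl
          rw [e1, e2]
          exact T_low_mem_S hn b'.val a.val hlt ha
      · omega
    exact conj_PP_mem hn hUa (U_mem_S hn a) hPab' e1 e2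

lemma T_mem_S (a b : Fin (2 * n)) (h1 : b ≠ a) (h2 : b ≠ a.rev) :
    PP a b ∈ Subgroup.closure (genC n hn) := by
  rcases lt_or_ge a.val n with ha | ha
  · exact T_mid_mem_S hn a b ha h1 h2
  · have harv : a.rev.val < n := by rw [Fin.val_rev]; omega
    have h1' : b.rev ≠ a.rev := fun e => h1 (Fin.rev_injective e)
    have h2' : b.rev ≠ a.rev.rev := by rw [Fin.rev_rev]; exact (ne_rev_symm h2).symm
    have := PP_rev (a := a.rev) (b := b.rev) h1' h2'
    rw [Fin.rev_rev, Fin.rev_rev] at this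
    rw [this]
    exact T_mid_mem_S hn a.rev b.rev harv h1' h2'

lemma main : ∀ k (w : Perm (Fin (2 * n))), w.support.card ≤ k → w ∈ HS n →
    w ∈ Subgroup.closure (genC n hn) := by
  intro k
  induction k with
  | zero =>
    intro w hc _
    have h0 : w.support = ∅ := Finset.card_eq_zero.mp (Nat.le_zero.mp hc)
    rw [Equiv.Perm.support_eq_empty_iff.mp h0]
    exact one_mem _
  | succ k ih =>
    intro w hc hH
    by_cases h1 : w = 1
    · rw [h1]; exact one_mem _
    obtain ⟨i, hi⟩ : ∃ i, w i ≠ i := by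
      by_contra hcon
      push_neg at hcon
      exact h1 (Equiv.ext hcon)
    set j := w i with hj
    have hji : j ≠ i := hi
    have hwrev : ∀ x : Fin (2 * n), w x.rev = (w x).rev := hs_rev hH
    obtain ⟨v, hvS, hvHS, hv1, hv2⟩ : ∃ v : Perm (Fin (2 * n)),
        v ∈ Subgroup.closure (genC n hn) ∧ v ∈ HS n ∧ v j = i ∧
        ∀ x, x ≠ i → x ≠ i.rev → x ≠ j → x ≠ j.rev → v x = x := by
      rcases eq_or_ne j i.rev with hj2 | hj2
      · refine ⟨Equiv.swap i i.rev, U_mem_S hn i, U_mem_HS i, ?_, ?_⟩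
        · rw [hj2, Equiv.swap_apply_right]
        · intro x hx1 hx2 _ _
          exact Equiv.swap_apply_of_ne_of_ne hx1 hx2
      · refine ⟨PP i j, T_mem_S hn i j hji hj2, PP_mem_HS hji hj2, PP_apply_snd hj2, ?_⟩
        intro x hx1 hx3 hx2 hx4
        exact PP_apply_fix hx1 hx2 hx3 hx4
    have hsub : (v * w).support ⊆ w.support.erase i := by
      intro x hx
      rw [Equiv.Perm.mem_support, Equiv.Perm.mul_apply] at hx
      rw [Finset.mem_erase, Equiv.Perm.mem_support]
      constructor
      · rintro rfl
        rw [← hj, hv1] at hx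
        exact hx rfl
      · intro h0
        apply hx
        rw [h0]
        have hwj : w j ≠ j := fun e => hji (w.injective (e.trans hj))
        apply hv2
        · rintro rfl; exact hi h0
        · rintro rfl
          rw [hwrev] at h0
          exact hji (Fin.rev_injective (hj ▸ h0))
        · rintro rfl; exact hwj h0
        · rintro rfl
          rw [hwrev] at h0
          exact hwj (Fin.rev_injective h0)
    have hcard : (v * w).support.card ≤ k := by
      have h2 := Finset.card_le_card hsub
      have h3 : i ∈ w.support := Equiv.Perm.mem_support.mpr hi
      have h4 := Finset.card_erase_of_mem h3
      omega
    have hvw : v * w ∈ Subgroup.closure (genC n hn) := ih (v * w) hcard ((HS n).mul_mem hvHS hH)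
    have hw : w = v⁻¹ * (v * w) := by group
    rw [hw]
    exact Subgroup.mul_mem _ (Subgroup.inv_mem _ hvS) hvw

end Stmt15Aux

theorem stmt15 (n : ℕ) (hn : 0 < n) (w : Equiv.Perm (Fin (2 * n))) :
    w ∈ Subgroup.closure (genC n hn) ↔ ∀ i, w i = Fin.rev (w (Fin.rev i)) := by
  constructor
  · intro h
    exact Stmt15Aux.mem_HS_iff.mp
      (((Subgroup.closure_le (Stmt15Aux.HS n)).mpr (Stmt15Aux.genC_sub_HS hn)) h)
  · intro h
    exact Stmt15Aux.main hn w.support.card w le_rfl (Stmt15Aux.mem_HS_iff.mpr h)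
end
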